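/- arXiv:2002.02076 — 6 statements merged into one kernel-verified Lean document; each statement's English description precedes it below -/
import Mathlib

section
/- Let V be a finite-dimensional representation of a torus T with all weight spaces one-dimensional, and suppose the set of weights Φ(V) lies in an open half-space. If an element P of the group ring ℤ[X(T)] has simple factor 1 − e^{−α} for α ∈ Φ(V) (i.e. P = (1 − e^{−α})·Q where Q lies in the subring generated by e^{−λ}, λ ∈ Φ(V) \ {α}), and α is integrally indecomposable in Φ(V) (not expressible as a sum of at least two elements of Φ(V)), then in the formal power series expansion of P / ∏_{β∈Φ(V)}(1 − e^{−β}) as a sum of terms e^{−γ} with γ in the nonnegative integer cone of Φ(V), the coefficient of e^{−α} is zero. -/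
/-- The number of ways to write `γ` as a nonnegative integer linear combination of
elements of the finite set `Φ`; this is the coefficient of `e^{-γ}` in the formal
expansion of `∏_{β ∈ Φ} (1 - e^{-β})⁻¹ = ∏_{β ∈ Φ} (1 + e^{-β} + e^{-2β} + ⋯)`. -/
noncomputable def nreps {M : Type*} [AddCommGroup M] (Φ : Finset M) (γ : M) : ℕ :=
  Set.ncard {c : M → ℕ | (∀ β ∉ Φ, c β = 0) ∧ ∑ β ∈ Φ, c β • β = γ}

/-- The coefficient of `e^{-γ}` in the formal power series expansion of
`P / ∏_{β ∈ Φ} (1 - e^{-β})`, where `P ∈ ℤ[X(T)]`. -/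
noncomputable def expansionCoeff {M : Type*} [AddCommGroup M] (Φ : Finset M)
    (P : AddMonoidAlgebra ℤ M) (γ : M) : ℤ :=
  ∑ μ ∈ P.coeff.support, P.coeff μ * (nreps Φ (γ + μ) : ℤ)

/-! Since `P = Q - e^{-α} Q`, the coefficient of `e^{-α}` is `∑_μ Q_μ (nreps (α + μ) - nreps μ)`,
and `-μ` is a nonnegative combination of `Φ \ {α}` for every `μ` in the support of `Q`.
Every representation of `α + μ` then uses `α`: otherwise adding a representation of `-μ`
avoiding `α` would represent `α` without using `α`, which indecomposability forbids.
So removing one copy of `α` is a bijection onto the representations of `μ`, and each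
term vanishes. -/

namespace AddMonoidAlgebra

variable {R M : Type*} [Ring R] [AddMonoid M]

def supportedSubring (N : AddSubmonoid M) : Subring (AddMonoidAlgebra R M) where
  carrier := {x | ↑x.coeff.support ⊆ (N : Set M)}
  mul_mem' {x y} hx hy := by
    classical
    intro μ hμ
    obtain ⟨a, ha, b, hb, rfl⟩ := Finset.mem_add.mp (support_coeff_mul_subset x y hμ)
    exact N.add_mem (hx ha) (hy hb)
  one_mem' μ hμ := by
    rw [Finset.mem_singleton.mp (support_coeff_one_subset hμ)]
    exact N.zero_mem
  add_mem' {x y} hx hy := by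
    classical
    intro μ hμ
    rw [coeff_add] at hμ
    exact (Finset.mem_union.mp (Finsupp.support_add hμ)).elim (hx ·) (hy ·)
  zero_mem' μ hμ := by simp at hμ
  neg_mem' {x} hx := by simpa [coeff_neg] using hx

lemma coeff_support_subset_of_mem_closure {N : AddSubmonoid M} {s : Set (AddMonoidAlgebra R M)}
    (hs : ∀ x ∈ s, ↑x.coeff.support ⊆ (N : Set M)) {x : AddMonoidAlgebra R M}
    (hx : x ∈ Subring.closure s) : ↑x.coeff.support ⊆ (N : Set M) :=
  Subring.closure_le (t := supportedSubring N).mpr hs hx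

end AddMonoidAlgebra

section Representations

variable {M : Type*} [AddCommGroup M] {Φ : Finset M}

def reps (Φ : Finset M) (γ : M) : Set (M → ℕ) :=
  {c | (∀ β ∉ Φ, c β = 0) ∧ ∑ β ∈ Φ, c β • β = γ}

lemma nreps_eq_ncard_reps (Φ : Finset M) (γ : M) : nreps Φ γ = (reps Φ γ).ncard := rfl

lemma add_mem_reps {c d : M → ℕ} {γ δ : M} (hc : c ∈ reps Φ γ) (hd : d ∈ reps Φ δ) :
    c + d ∈ reps Φ (γ + δ) := by
  refine ⟨fun β hβ => by simp [hc.1 β hβ, hd.1 β hβ], ?_⟩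
  simp only [Pi.add_apply, add_smul, Finset.sum_add_distrib, hc.2, hd.2]

lemma mem_reps_of_add_mem_reps {c d : M → ℕ} {γ δ : M} (hcd : c + d ∈ reps Φ (γ + δ))
    (hd : d ∈ reps Φ δ) : c ∈ reps Φ γ := by
  refine ⟨fun β hβ => Nat.eq_zero_of_add_eq_zero_right (hcd.1 β hβ), ?_⟩
  have := hcd.2
  simp only [Pi.add_apply, add_smul, Finset.sum_add_distrib, hd.2] at this
  exact add_right_cancel this

lemma single_mem_reps [DecidableEq M] {β : M} (hβ : β ∈ Φ) : Pi.single β 1 ∈ reps Φ β := by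
  refine ⟨fun γ hγ => Pi.single_eq_of_ne (ne_of_mem_of_not_mem hβ hγ).symm 1, ?_⟩
  rw [Finset.sum_eq_single_of_mem β hβ fun γ _ hγ => by simp [hγ]]
  simp

lemma exists_mem_reps_of_mem_closure {α μ : M}
    (hμ : μ ∈ AddSubmonoid.closure ((Φ : Set M) \ {α})) : ∃ d ∈ reps Φ μ, d α = 0 := by
  classical
  induction hμ using AddSubmonoid.closure_induction with
  | mem β hβ => exact ⟨Pi.single β 1, single_mem_reps hβ.1, Pi.single_eq_of_ne' hβ.2 1⟩
  | zero => exact ⟨0, ⟨fun _ _ => rfl, by simp⟩, rfl⟩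
  | add μ ν _ _ hμ hν =>
    obtain ⟨d, hd, hdα⟩ := hμ
    obtain ⟨e, he, heα⟩ := hν
    exact ⟨d + e, add_mem_reps hd he, by simp [hdα, heα]⟩

end Representations

section Indecomposable

variable {M : Type*} [AddCommGroup M] {Φ : Finset M} {α : M}

def IsIntegrallyIndecomposable (Φ : Finset M) (α : M) : Prop :=
  ¬ ∃ c : M → ℕ, (∀ β ∉ Φ, c β = 0) ∧ 2 ≤ ∑ β ∈ Φ, c β ∧ ∑ β ∈ Φ, c β • β = α

namespace IsIntegrallyIndecomposable

lemma ne_zero (hind : IsIntegrallyIndecomposable Φ α) (hα : α ∈ Φ) : α ≠ 0 := by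
  classical
  rintro rfl
  -- `0 = 2 • 0` is a decomposition of `0`
  refine hind ⟨Pi.single 0 2, fun β hβ => Pi.single_eq_of_ne (ne_of_mem_of_not_mem hα hβ).symm 2,
    by simp [Finset.sum_pi_single', hα], Finset.sum_eq_zero fun β _ => ?_⟩
  obtain rfl | hβ := eq_or_ne β 0 <;> simp [*]

lemma apply_ne_zero_of_mem_reps (hind : IsIntegrallyIndecomposable Φ α) (hα : α ∈ Φ)
    {c : M → ℕ} (hc : c ∈ reps Φ α) : c α ≠ 0 := by
  classical
  intro hcα
  have hle : ∑ β ∈ Φ, c β ≤ 1 := by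
    by_contra! h2
    exact hind ⟨c, hc.1, h2, hc.2⟩
  obtain ⟨β, hβ, hcβ⟩ : ∃ β ∈ Φ, c β ≠ 0 := by
    by_contra! h0
    exact hind.ne_zero hα (hc.2 ▸ Finset.sum_eq_zero fun β hβ => by simp [h0 β hβ])
  have hcβ_one : c β = 1 := by
    have := Finset.single_le_sum (f := c) (fun _ _ => Nat.zero_le _) hβ
    omega
  have hc_eq_zero : ∀ γ ∈ Φ, γ ≠ β → c γ = 0 := by
    intro γ hγ hγβ
    have := Finset.add_sum_erase Φ c hβ
    have := Finset.single_le_sum (f := c) (fun _ _ => Nat.zero_le _)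
      (Finset.mem_erase.2 ⟨hγβ, hγ⟩)
    omega
  have hαβ : α = β := by
    rw [← hc.2, Finset.sum_eq_single_of_mem β hβ fun γ hγ hγβ => by simp [hc_eq_zero γ hγ hγβ]]
    simp [hcβ_one]
  exact hcβ (hαβ ▸ hcα)

lemma nreps_add_eq (hind : IsIntegrallyIndecomposable Φ α) (hα : α ∈ Φ) {μ : M} {d : M → ℕ}
    (hd : d ∈ reps Φ (-μ)) (hdα : d α = 0) : nreps Φ (α + μ) = nreps Φ μ := by
  classical
  have hpos : ∀ c ∈ reps Φ (α + μ), c α ≠ 0 := fun c hc hcα =>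
    hind.apply_ne_zero_of_mem_reps hα (by simpa using add_mem_reps hc hd) (by simp [hcα, hdα])
  have himg : reps Φ (α + μ) = (· + Pi.single α 1) '' reps Φ μ := by
    ext c
    constructor
    · intro hc
      have hle : Pi.single α 1 ≤ c := fun β => by
        obtain rfl | hβ := eq_or_ne β α
        · simpa [Nat.one_le_iff_ne_zero] using hpos c hc
        · simp [hβ]
      refine ⟨c - Pi.single α 1, mem_reps_of_add_mem_reps ?_ (single_mem_reps hα),
        tsub_add_cancel_of_le hle⟩
      rwa [tsub_add_cancel_of_le hle, add_comm μ]
    · rintro ⟨c, hc, rfl⟩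
      rw [add_comm α]
      exact add_mem_reps hc (single_mem_reps hα)
  rw [nreps_eq_ncard_reps, himg, Set.ncard_image_of_injective _ (add_left_injective _),
    nreps_eq_ncard_reps]

end IsIntegrallyIndecomposable

end Indecomposable

lemma neg_mem_closure_of_mem_support {R M : Type*} [Ring R] [AddCommGroup M] {Φ : Finset M}
    {α μ : M} {Q : AddMonoidAlgebra R M}
    (hQ : Q ∈ Subring.closure
      ((fun lam => (AddMonoidAlgebra.single (-lam) (1 : R) : AddMonoidAlgebra R M)) ''
        ((Φ : Set M) \ {α})))
    (hμ : μ ∈ Q.coeff.support) : -μ ∈ AddSubmonoid.closure ((Φ : Set M) \ {α}) := by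
  refine AddMonoidAlgebra.coeff_support_subset_of_mem_closure
    (N := (AddSubmonoid.closure ((Φ : Set M) \ {α})).comap negAddMonoidHom) ?_ hQ hμ
  rintro _ ⟨lam, hlam, rfl⟩ ν hν
  rw [Finset.mem_singleton.mp (Finsupp.support_single_subset hν)]
  simpa using AddSubmonoid.subset_closure hlam

section ExpansionCoeff

variable {M : Type*} [AddCommGroup M] (Φ : Finset M)

lemma expansionCoeff_eq_sum (P : AddMonoidAlgebra ℤ M) (γ : M) :
    expansionCoeff Φ P γ = P.coeff.sum fun μ a => a * (nreps Φ (γ + μ) : ℤ) := rfl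

lemma expansionCoeff_sub (P₁ P₂ : AddMonoidAlgebra ℤ M) (γ : M) :
    expansionCoeff Φ (P₁ - P₂) γ = expansionCoeff Φ P₁ γ - expansionCoeff Φ P₂ γ := by
  simp only [expansionCoeff_eq_sum, AddMonoidAlgebra.coeff_sub]
  exact Finsupp.sum_sub_index fun _ _ _ => sub_mul _ _ _

lemma expansionCoeff_single_mul (Q : AddMonoidAlgebra ℤ M) (τ γ : M) :
    expansionCoeff Φ (AddMonoidAlgebra.single τ 1 * Q) γ = expansionCoeff Φ Q (γ + τ) := by
  have hcoeff : (AddMonoidAlgebra.single τ (1 : ℤ) * Q).coeff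
      = Finsupp.mapDomain (Equiv.addLeft τ) Q.coeff := by
    ext ν
    rw [AddMonoidAlgebra.coeff_single_mul_apply, one_mul, Finsupp.mapDomain_equiv_apply]
    simp
  rw [expansionCoeff_eq_sum, hcoeff,
    Finsupp.sum_mapDomain_index_inj (Equiv.addLeft τ).injective, expansionCoeff_eq_sum]
  simp [add_assoc]

lemma expansionCoeff_congr {P : AddMonoidAlgebra ℤ M} {γ γ' : M}
    (h : ∀ μ ∈ P.coeff.support, nreps Φ (γ + μ) = nreps Φ (γ' + μ)) :
    expansionCoeff Φ P γ = expansionCoeff Φ P γ' :=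
  Finset.sum_congr rfl fun μ hμ => by rw [h μ hμ]

end ExpansionCoeff

theorem stmt2_general {M : Type*} [AddCommGroup M] (Φ : Finset M)
    (α : M) (hαΦ : α ∈ Φ)
    (hind : ¬ ∃ c : M → ℕ, (∀ β ∉ Φ, c β = 0) ∧ 2 ≤ ∑ β ∈ Φ, c β ∧
      ∑ β ∈ Φ, c β • β = α)
    (P Q : AddMonoidAlgebra ℤ M)
    (hQ : Q ∈ Subring.closure
      ((fun lam => (AddMonoidAlgebra.single (-lam) (1 : ℤ) : AddMonoidAlgebra ℤ M)) ''
        ((Φ : Set M) \ {α})))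
    (hP : P = (1 - AddMonoidAlgebra.single (-α) (1 : ℤ)) * Q) :
    expansionCoeff Φ P α = 0 := by
  rw [hP, sub_mul, one_mul, expansionCoeff_sub, expansionCoeff_single_mul, add_neg_cancel,
    sub_eq_zero]
  refine expansionCoeff_congr Φ fun μ hμ => ?_
  obtain ⟨d, hd, hdα⟩ := exists_mem_reps_of_mem_closure (neg_mem_closure_of_mem_support hQ hμ)
  rw [zero_add]
  exact IsIntegrallyIndecomposable.nreps_add_eq hind hαΦ hd hdα

/-- Let `Φ = Φ(V)` be the (one-dimensional) weights of a torus
representation, lying in an open half-space (witnessed by the additive functional `h`).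
If `α ∈ Φ` is integrally indecomposable in `Φ` and `P = (1 - e^{-α})·Q` with `Q` in
the subring generated by the `e^{-λ}`, `λ ∈ Φ \ {α}` (i.e. `1 - e^{-α}` is a simple
factor of `P`), then the coefficient of `e^{-α}` in the formal expansion of
`P / ∏_{β ∈ Φ}(1 - e^{-β})` is zero. -/
theorem stmt2 {M : Type*} [AddCommGroup M] (Φ : Finset M)
    (h : M →+ ℝ) (hpos : ∀ β ∈ Φ, 0 < h β)
    (α : M) (hαΦ : α ∈ Φ)
    (hind : ¬ ∃ c : M → ℕ, (∀ β ∉ Φ, c β = 0) ∧ 2 ≤ ∑ β ∈ Φ, c β ∧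
      ∑ β ∈ Φ, c β • β = α)
    (P Q : AddMonoidAlgebra ℤ M)
    (hQ : Q ∈ Subring.closure
      ((fun lam => (AddMonoidAlgebra.single (-lam) (1 : ℤ) : AddMonoidAlgebra ℤ M)) ''
        ((Φ : Set M) \ {α})))
    (hP : P = (1 - AddMonoidAlgebra.single (-α) (1 : ℤ)) * Q) :
    expansionCoeff Φ P α = 0 :=
  stmt2_general Φ α hαΦ hind P Q hQ hP
end

section
/- Let (W, S) be a finite Coxeter system and let q = (q₁,…,q_l) be a word in the simple reflections. Then the Demazure product δ(q) is greater than or equal to w in Bruhat order if and only if q contains a subword that is a reduced expression for w. -/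
/-!
For a reflection `t`, the parity of the number of occurrences of `t` in the left inversion
sequence of a word `ω` depends only on `π ω`: it is the value at `t` of a cocycle
`W → (W → ℤˣ)`, obtained by lifting the simple reflections to the semidirect product
`(W → ℤˣ) ⋊ W`. This gives the strong exchange condition, hence the subword property: for a
reduced word `α`, the elements having a reduced subword in `α` are exactly those below `π α`
for the Bruhat order defined by chains of reflections, so this set depends only on `π α`.
By induction on `q`, the elements with a reduced subword in `q` are then those with a reduced
subword in a reduced word for `δ(q)`: if `δ(q) s > δ(q)`, a reduced word for `δ(q)` followed
by `s` is one for `δ(q s)`; if `δ(q) s < δ(q)`, a reduced word for `δ(q)` ending in `s`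
absorbs the new letter.
-/

/-- The Demazure product `δ(q)` of a word `q = (q₁, …, q_l)` in the simple reflections,
defined via the 0-Hecke relations (`H_{q₁} ⋯ H_{q_l} = H_{δ(q)}`): multiplying left to
right, a letter is used exactly when it increases the length. -/
noncomputable def demazureProd {B W : Type*} [Group W] {M : CoxeterMatrix B}
    (cs : CoxeterSystem M W) (q : List B) : W :=
  q.foldl (fun w i => if cs.length w < cs.length (w * cs.simple i)
    then w * cs.simple i else w) 1

/-- Bruhat order on `W`, via the subword property: `u ≤ w` iff some reduced word for `w`
contains a subword that is a reduced word for `u`. -/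
def bruhatLE {B W : Type*} [Group W] {M : CoxeterMatrix B}
    (cs : CoxeterSystem M W) (u w : W) : Prop :=
  ∃ lw : List B, cs.IsReduced lw ∧ cs.wordProd lw = w ∧
    ∃ lu : List B, lu.Sublist lw ∧ cs.IsReduced lu ∧ cs.wordProd lu = u

open scoped Classical

theorem SemidirectProduct.mk_pow {N G : Type*} [CommGroup N] [Group G] {φ : G →* MulAut N}
    (n : N) (g : G) (m : ℕ) :
    (⟨n, g⟩ : N ⋊[φ] G) ^ m = ⟨∏ k ∈ Finset.range m, φ (g ^ k) n, g ^ m⟩ := by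
  induction m with
  | zero => ext <;> simp
  | succ m ih => rw [pow_succ, ih, SemidirectProduct.mul_def, Finset.prod_range_succ, pow_succ]

theorem Finset.prod_range_two_mul {M : Type*} [CommMonoid M] (f : ℕ → M) (m : ℕ) :
    ∏ n ∈ range (2 * m), f n = ∏ k ∈ range m, f (2 * k) * f (2 * k + 1) := by
  induction m with
  | zero => rfl
  | succ m ih => rw [mul_add_one, prod_range_succ, prod_range_succ, prod_range_succ, ih, mul_assoc]

def conjArrow (W : Type*) [Group W] : W →* MulAut (W → ℤˣ) :=
  mulAutArrow.comp (ConjAct.toConjAct : W ≃* ConjAct W).toMonoidHom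

theorem conjArrow_apply {W : Type*} [Group W] (w : W) (f : W → ℤˣ) (x : W) :
    conjArrow W w f x = f (w⁻¹ * x * w) := by
  show f ((ConjAct.toConjAct w)⁻¹ • x) = _
  rw [← map_inv, ConjAct.toConjAct_smul, inv_inv]

theorem conjArrow_mulSingle {W : Type*} [Group W] (w t : W) (a : ℤˣ) :
    conjArrow W w (Pi.mulSingle t a) = Pi.mulSingle (w * t * w⁻¹) a := by
  funext x
  have hconj : w⁻¹ * x * w = t ↔ x = w * t * w⁻¹ := by
    constructor <;> rintro rfl <;> group
  simp only [conjArrow_apply, Pi.mulSingle_apply, hconj]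

namespace CoxeterSystem

open List

variable {B W : Type*} [Group W] {M : CoxeterMatrix B} (cs : CoxeterSystem M W)

local prefix:100 "s " => cs.simple
local prefix:100 "π " => cs.wordProd
local prefix:100 "ℓ " => cs.length
local prefix:100 "lis " => cs.leftInvSeq

theorem simple_mul_simple_pow_conj (i j : B) (k : ℕ) :
    (s i * s j) ^ k * s i * ((s i * s j) ^ k)⁻¹ = (s i * s j) ^ (2 * k) * s i := by
  have hsemi : SemiconjBy (s i) (s j * s i) (s i * s j) := (mul_assoc _ _ _).symm
  rw [← inv_pow, mul_inv_rev, inv_simple, inv_simple, mul_assoc, (hsemi.pow_right k).eq,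
    two_mul, pow_add, mul_assoc]

theorem isLiftable_mulSingle_simple :
    M.IsLiftable fun i ↦ (⟨Pi.mulSingle (s i) (-1), s i⟩ : (W → ℤˣ) ⋊[conjArrow W] W) := by
  intro i j
  set c := s i * s j
  have hmul : (⟨Pi.mulSingle (s i) (-1), s i⟩ : (W → ℤˣ) ⋊[conjArrow W] W) *
      ⟨Pi.mulSingle (s j) (-1), s j⟩ =
      ⟨Pi.mulSingle (s i) (-1) * Pi.mulSingle (c * s i) (-1), c⟩ := by
    rw [SemidirectProduct.mul_def, conjArrow_mulSingle, inv_simple]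
  have hconj (k : ℕ) :
      conjArrow W (c ^ k) (Pi.mulSingle (s i) (-1) * Pi.mulSingle (c * s i) (-1)) =
        Pi.mulSingle (c ^ (2 * k) * s i) (-1) * Pi.mulSingle (c ^ (2 * k + 1) * s i) (-1) := by
    have hodd : c ^ k * (c * s i) * (c ^ k)⁻¹ = c * (c ^ k * s i * (c ^ k)⁻¹) := by group
    rw [map_mul, conjArrow_mulSingle, conjArrow_mulSingle, hodd, simple_mul_simple_pow_conj,
      ← mul_assoc, ← pow_succ']
  have hperiodic (n : ℕ) : c ^ (M i j + n) = c ^ n := by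
    rw [pow_add, simple_mul_simple_pow, one_mul]
  -- The first component is the product over `n < 2 * M i j` of
  -- `Pi.mulSingle (c ^ n * s i) (-1)`, in which every factor occurs twice as `c ^ M i j = 1`.
  rw [hmul, SemidirectProduct.mk_pow, simple_mul_simple_pow]
  simp_rw [hconj]
  rw [← Finset.prod_range_two_mul (fun n ↦ Pi.mulSingle (c ^ n * s i) (-1)), two_mul,
    Finset.prod_range_add]
  simp_rw [hperiodic, ← sq]
  rw [show ∀ f : W → ℤˣ, f ^ 2 = 1 from fun f ↦ funext fun x ↦ Int.units_sq (f x)]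
  rfl

noncomputable def reflCocycleHom : W →* (W → ℤˣ) ⋊[conjArrow W] W :=
  cs.lift ⟨_, cs.isLiftable_mulSingle_simple⟩

theorem reflCocycleHom_wordProd (ω : List B) :
    cs.reflCocycleHom (π ω) = ⟨((lis ω).map (Pi.mulSingle · (-1))).prod, π ω⟩ := by
  induction ω with
  | nil => rw [wordProd_nil, map_one]; rfl
  | cons i ω ih =>
    rw [wordProd_cons, map_mul, ih, reflCocycleHom, lift_apply_simple, SemidirectProduct.mul_def,
      leftInvSeq, map_cons, prod_cons, map_list_prod, map_map, map_map]
    simp only [Function.comp_def, conjArrow_mulSingle]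
    rfl

theorem reflCocycleHom_right (w : W) : (cs.reflCocycleHom w).right = w := by
  obtain ⟨ω, rfl⟩ := cs.wordProd_surjective w
  rw [reflCocycleHom_wordProd]

noncomputable def reflCocycle (w : W) : W → ℤˣ := (cs.reflCocycleHom w).left

theorem reflCocycle_mul_apply (x y t : W) :
    cs.reflCocycle (x * y) t = cs.reflCocycle x t * cs.reflCocycle y (x⁻¹ * t * x) := by
  rw [reflCocycle, map_mul, SemidirectProduct.mul_left, reflCocycleHom_right, Pi.mul_apply,
    conjArrow_apply]
  rfl

theorem reflCocycle_wordProd_apply_of_not_mem {ω : List B} {t : W} (ht : t ∉ lis ω) :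
    cs.reflCocycle (π ω) t = 1 := by
  simp only [reflCocycle, reflCocycleHom_wordProd, Pi.list_prod_apply, map_map]
  refine prod_eq_one ?_
  simp only [mem_map, Function.comp_apply]
  rintro _ ⟨r, hr, rfl⟩
  exact Pi.mulSingle_eq_of_ne (by rintro rfl; exact ht hr) _

theorem IsReflection.reflCocycle_apply_self {t : W} (ht : cs.IsReflection t) :
    cs.reflCocycle t t = -1 := by
  obtain ⟨w, i, rfl⟩ := ht
  have hsimple : cs.reflCocycle (s i) (s i) = -1 := by
    rw [reflCocycle, reflCocycleHom, lift_apply_simple]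
    exact Pi.mulSingle_eq_same (M := fun _ : W ↦ ℤˣ) (s i) (-1)
  -- Evaluate the cocycle identity for `t * w = w * s i` at `t`.
  set t := w * s i * w⁻¹ with ht
  have h := cs.reflCocycle_mul_apply t w t
  rw [show t * w = w * s i by rw [ht]; group, reflCocycle_mul_apply,
    show w⁻¹ * t * w = s i by rw [ht]; group,
    hsimple, inv_mul_cancel, one_mul, mul_comm] at h
  exact (mul_right_cancel h).symm

theorem mem_leftInvSeq_of_isLeftInversion {ω : List B} {t : W}
    (ht : cs.IsLeftInversion (π ω) t) : t ∈ lis ω := by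
  by_contra hmem
  obtain ⟨α, hα, hαprod⟩ := cs.exists_isReduced (t * π ω)
  have hcocycle : cs.reflCocycle (π α) t = -1 := by
    rw [← hαprod, reflCocycle_mul_apply, ht.1.reflCocycle_apply_self, inv_mul_cancel, one_mul,
      cs.reflCocycle_wordProd_apply_of_not_mem hmem, mul_one]
  have hmemα : t ∈ lis α := by
    by_contra h
    rw [cs.reflCocycle_wordProd_apply_of_not_mem h] at hcocycle
    exact absurd hcocycle (by decide)
  have hlt := (cs.isLeftInversion_of_mem_leftInvSeq hα hmemα).2
  rw [← hαprod, ← mul_assoc, ht.1.mul_self, one_mul] at hlt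
  exact lt_asymm ht.2 hlt

theorem exists_eraseIdx_eq_mul_of_isLeftInversion {ω : List B} {t : W}
    (ht : cs.IsLeftInversion (π ω) t) : ∃ j < ω.length, π (ω.eraseIdx j) = t * π ω := by
  obtain ⟨j, hj, rfl⟩ := getElem_of_mem (cs.mem_leftInvSeq_of_isLeftInversion ht)
  rw [length_leftInvSeq] at hj
  refine ⟨j, hj, ?_⟩
  rw [← getD_leftInvSeq_mul_wordProd, getD_eq_getElem]

theorem isReduced_concat_iff (ω : List B) (i : B) :
    cs.IsReduced (ω ++ [i]) ↔ cs.IsReduced ω ∧ ℓ (π ω) < ℓ (π ω * s i) := by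
  have := cs.length_mul_simple (π ω) i
  have := cs.length_wordProd_le ω
  constructor
  · intro h
    have hω : cs.IsReduced ω := by simpa using h.take ω.length
    refine ⟨hω, ?_⟩
    have := h.eq
    rw [wordProd_append, wordProd_singleton, length_append, length_singleton] at this
    omega
  · rintro ⟨hω, hlt⟩
    have := hω.eq
    show ℓ (π (ω ++ [i])) = _
    rw [wordProd_append, wordProd_singleton, length_append, length_singleton]
    omega

theorem exists_isReduced_concat {w : W} {i : B} (hw : ℓ (w * s i) < ℓ w) :
    ∃ ω, cs.IsReduced (ω ++ [i]) ∧ π (ω ++ [i]) = w := by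
  obtain ⟨ω, hω, hprod⟩ := cs.exists_isReduced (w * s i)
  refine ⟨ω, (cs.isReduced_concat_iff ω i).mpr ⟨hω, ?_⟩, ?_⟩
  · rwa [← hprod, simple_mul_simple_cancel_right]
  · rw [wordProd_append, wordProd_singleton, ← hprod, simple_mul_simple_cancel_right]

def HasReducedSubword (q : List B) (w : W) : Prop :=
  ∃ q' : List B, q' <+ q ∧ cs.IsReduced q' ∧ π q' = w

variable {cs} in
theorem HasReducedSubword.mono {q q' : List B} {w : W} (h : cs.HasReducedSubword q w)
    (hq : q <+ q') : cs.HasReducedSubword q' w :=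
  let ⟨r, hr, hred, hprod⟩ := h
  ⟨r, hr.trans hq, hred, hprod⟩

theorem hasReducedSubword_wordProd (q : List B) : cs.HasReducedSubword q (π q) := by
  induction q with
  | nil => exact ⟨[], .slnil, by simp [IsReduced], rfl⟩
  | cons i q ih =>
    obtain ⟨r, hr, hred, hprod⟩ := ih
    rw [wordProd_cons, ← hprod]
    rcases cs.length_simple_mul (π r) i with hup | hdown
    · refine ⟨i :: r, hr.cons_cons i, ?_, wordProd_cons ..⟩
      show ℓ (π (i :: r)) = _
      rw [wordProd_cons, hup, hred.eq, length_cons]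
    · obtain ⟨j, hj, hje⟩ := cs.exists_eraseIdx_eq_mul_of_isLeftInversion
        ⟨cs.isReflection_simple i, by omega⟩ (ω := r)
      refine ⟨r.eraseIdx j, ((r.eraseIdx_sublist j).trans hr).cons i, ?_, hje⟩
      show ℓ (π (r.eraseIdx j)) = _
      rw [hje, length_eraseIdx_of_lt hj, ← hred.eq]
      omega

theorem hasReducedSubword_concat_iff (q : List B) (i : B) (w : W) :
    cs.HasReducedSubword (q ++ [i]) w ↔ cs.HasReducedSubword q w ∨
      (ℓ (w * s i) < ℓ w ∧ cs.HasReducedSubword q (w * s i)) := by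
  constructor
  · rintro ⟨r, hr, hred, rfl⟩
    rcases sublist_append_iff.mp hr with ⟨r₁, r₂, rfl, hr₁, hr₂⟩
    rcases sublist_singleton.mp hr₂ with rfl | rfl
    · rw [append_nil] at hred ⊢
      exact Or.inl ⟨r₁, hr₁, hred, rfl⟩
    · obtain ⟨hred₁, hlt⟩ := (cs.isReduced_concat_iff r₁ i).mp hred
      rw [wordProd_append, wordProd_singleton, simple_mul_simple_cancel_right]
      exact Or.inr ⟨hlt, r₁, hr₁, hred₁, rfl⟩
  · rintro (h | ⟨hlt, r, hr, hred, hprod⟩)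
    · exact h.mono (sublist_append_left q [i])
    · refine ⟨r ++ [i], hr.append (Sublist.refl [i]), ?_, ?_⟩
      · rw [isReduced_concat_iff, hprod, simple_mul_simple_cancel_right]
        exact ⟨hred, hlt⟩
      · rw [wordProd_append, wordProd_singleton, hprod, simple_mul_simple_cancel_right]

variable {cs}

theorem HasReducedSubword.of_concat_mul_simple {q : List B} {i : B} {w : W}
    (h : cs.HasReducedSubword (q ++ [i]) (w * s i)) (hw : ℓ (w * s i) < ℓ w) :
    cs.HasReducedSubword (q ++ [i]) w := by
  rw [hasReducedSubword_concat_iff, simple_mul_simple_cancel_right] at h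
  rw [hasReducedSubword_concat_iff]
  rcases h with h | ⟨hlt, _⟩
  · exact Or.inr ⟨hw, h⟩
  · exact absurd hw (lt_asymm hlt)

variable (cs) in
/-- The Bruhat order in its chain form; `bruhatLE` is its subword form. -/
def ChainLE (u v : W) : Prop :=
  Relation.ReflTransGen (fun x y ↦ ∃ t, cs.IsLeftInversion x t ∧ y = t * x) v u

theorem ChainLE.refl (u : W) : cs.ChainLE u u := Relation.ReflTransGen.refl

theorem ChainLE.trans {u v w : W} (huv : cs.ChainLE u v) (hvw : cs.ChainLE v w) :
    cs.ChainLE u w :=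
  Relation.ReflTransGen.trans hvw huv

theorem IsLeftInversion.chainLE {w t : W} (ht : cs.IsLeftInversion w t) : cs.ChainLE (t * w) w :=
  .single ⟨t, ht, rfl⟩

theorem chainLE_mul_simple_self {w : W} {i : B} (hw : ℓ (w * s i) < ℓ w) :
    cs.ChainLE (w * s i) w :=
  .single ⟨w * s i * w⁻¹, ⟨⟨w, i, rfl⟩, by rwa [inv_mul_cancel_right]⟩, by group⟩

theorem ChainLE.hasReducedSubword {u : W} {α : List B} (h : cs.ChainLE u (π α)) :
    cs.HasReducedSubword α u := by
  induction h with
  | refl => exact cs.hasReducedSubword_wordProd α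
  | tail _ hstep ih =>
    obtain ⟨t, ht, rfl⟩ := hstep
    obtain ⟨r, hr, -, rfl⟩ := ih
    obtain ⟨j, -, hj⟩ := cs.exists_eraseIdx_eq_mul_of_isLeftInversion ht
    rw [← hj]
    exact (cs.hasReducedSubword_wordProd _).mono ((r.eraseIdx_sublist j).trans hr)

theorem ChainLE.mul_simple_of_wordProd_concat {α : List B} {i : B} {u : W}
    (hα : ∀ x, cs.HasReducedSubword (α ++ [i]) x → cs.ChainLE x (π (α ++ [i])))
    (h : cs.ChainLE u (π (α ++ [i]))) : cs.ChainLE (u * s i) (π (α ++ [i])) := by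
  rcases (cs.hasReducedSubword_concat_iff α i u).mp h.hasReducedSubword with hu | ⟨-, hu⟩
  · rcases cs.length_mul_simple u i with hup | hdown
    · refine hα _ ((cs.hasReducedSubword_concat_iff α i _).mpr (Or.inr ?_))
      rw [simple_mul_simple_cancel_right]
      exact ⟨by omega, hu⟩
    · exact (chainLE_mul_simple_self (by omega)).trans h
  · exact hα _ (hu.mono (sublist_append_left α [i]))

/-- The lifting property at ascents; the one at descents is assumed for shorter elements, where
`chainLE_of_hasReducedSubword` provides it by induction on length. -/
theorem ChainLE.mul_simple {u w : W} {i : B} (h : cs.ChainLE u w)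
    (hdown : ∀ v, ℓ v < ℓ w → ∀ u, cs.ChainLE u v → ℓ (v * s i) < ℓ v → cs.ChainLE (u * s i) v)
    (hw : ℓ w < ℓ (w * s i)) : cs.ChainLE (u * s i) (w * s i) := by
  induction h using Relation.ReflTransGen.head_induction_on with
  | refl => exact .refl _
  | head hstep hchain ih =>
    rename_i w _
    obtain ⟨t, ht, rfl⟩ := hstep
    have htw := ht.2
    rcases cs.length_mul_simple (t * w) i with hup | hdn
    · have htws : cs.IsLeftInversion (w * s i) t := by
        refine ⟨ht.1, ?_⟩
        have := cs.length_mul_simple w i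
        rw [← mul_assoc]
        omega
      have hstep := htws.chainLE
      rw [← mul_assoc] at hstep
      exact (ih (fun v hv ↦ hdown v (hv.trans htw)) (by omega)).trans hstep
    · have hws : cs.ChainLE w (w * s i) := by
        have := chainLE_mul_simple_self (cs := cs) (w := w * s i) (i := i)
          (by rwa [simple_mul_simple_cancel_right])
        rwa [simple_mul_simple_cancel_right] at this
      exact ((hdown (t * w) htw u hchain (by omega)).trans ht.chainLE).trans hws

theorem chainLE_of_hasReducedSubword {α : List B} (hα : cs.IsReduced α) {x : W}
    (h : cs.HasReducedSubword α x) : cs.ChainLE x (π α) := by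
  rcases eq_nil_or_concat' α with rfl | ⟨α, i, rfl⟩
  · obtain ⟨r, hr, -, rfl⟩ := h
    rw [sublist_nil.mp hr]
    exact .refl _
  obtain ⟨hα', hup⟩ := (cs.isReduced_concat_iff α i).mp hα
  have hdown : ∀ v, ℓ v < ℓ (π α) → ∀ u, cs.ChainLE u v → ℓ (v * s i) < ℓ v →
      cs.ChainLE (u * s i) v := by
    intro v hv u hu hvi
    obtain ⟨β, hβ, rfl⟩ := cs.exists_isReduced_concat hvi
    have hshorter : (β ++ [i]).length < (α ++ [i]).length := by
      rw [← hβ.eq, ← hα.eq, cs.wordProd_append α, wordProd_singleton]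
      omega
    exact hu.mul_simple_of_wordProd_concat fun y hy ↦ chainLE_of_hasReducedSubword hβ hy
  rw [wordProd_append, wordProd_singleton]
  rcases (cs.hasReducedSubword_concat_iff α i x).mp h with h | ⟨-, h⟩
  · exact (chainLE_of_hasReducedSubword hα' h).trans (by
      simpa using chainLE_mul_simple_self (cs := cs) (w := π α * s i) (i := i) (by simpa))
  · simpa using (chainLE_of_hasReducedSubword hα' h).mul_simple hdown hup
termination_by α.length
decreasing_by all_goals subst_vars; simp_all

theorem hasReducedSubword_iff_chainLE {α : List B} (hα : cs.IsReduced α) {x : W} :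
    cs.HasReducedSubword α x ↔ cs.ChainLE x (π α) :=
  ⟨chainLE_of_hasReducedSubword hα, ChainLE.hasReducedSubword⟩

theorem hasReducedSubword_congr {α α' : List B} (hα : cs.IsReduced α) (hα' : cs.IsReduced α')
    (h : π α = π α') {w : W} : cs.HasReducedSubword α w ↔ cs.HasReducedSubword α' w := by
  rw [hasReducedSubword_iff_chainLE hα, hasReducedSubword_iff_chainLE hα', h]

variable (cs)

theorem _root_.demazureProd_concat (q : List B) (i : B) :
    demazureProd cs (q ++ [i]) =
      if ℓ (demazureProd cs q) < ℓ (demazureProd cs q * s i) then demazureProd cs q * s i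
      else demazureProd cs q := by
  rw [demazureProd, foldl_append, foldl_cons, foldl_nil]
  rfl

theorem hasReducedSubword_iff_of_wordProd_eq_demazureProd (q : List B) {α : List B}
    (hα : cs.IsReduced α) (hαq : π α = demazureProd cs q) (w : W) :
    cs.HasReducedSubword q w ↔ cs.HasReducedSubword α w := by
  induction q using reverseRecOn generalizing α w with
  | nil =>
    have hlen := hα.eq
    rw [hαq, demazureProd, foldl_nil, length_one, eq_comm, List.length_eq_zero_iff] at hlen
    subst hlen
    rfl
  | append_singleton q i ih =>
    obtain ⟨α₀, hα₀, hα₀q⟩ := cs.exists_isReduced (demazureProd cs q)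
    rw [hasReducedSubword_concat_iff]
    rw [demazureProd_concat] at hαq
    split_ifs at hαq with hup
    · simp only [ih hα₀ hα₀q.symm]
      rw [← hasReducedSubword_concat_iff]
      refine hasReducedSubword_congr ((cs.isReduced_concat_iff α₀ i).mpr ⟨hα₀, ?_⟩) hα ?_
      · rwa [← hα₀q]
      · rw [hαq, wordProd_append, wordProd_singleton, hα₀q]
    · obtain ⟨β, hβ, hβq⟩ := cs.exists_isReduced_concat (w := demazureProd cs q) (i := i)
        (by have := cs.length_mul_simple (demazureProd cs q) i; omega)
      simp only [ih hβ hβq]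
      exact (or_iff_left_of_imp fun ⟨hw, h⟩ ↦ h.of_concat_mul_simple hw).trans
        (hasReducedSubword_congr hβ hα (hβq.trans hαq.symm))

end CoxeterSystem

theorem stmt4_general {B W : Type*} [Group W] {M : CoxeterMatrix B}
    (cs : CoxeterSystem M W) (q : List B) (w : W) :
    bruhatLE cs w (demazureProd cs q) ↔
      ∃ q' : List B, q'.Sublist q ∧ cs.IsReduced q' ∧ cs.wordProd q' = w := by
  change _ ↔ cs.HasReducedSubword q w
  constructor
  · rintro ⟨α, hα, hαq, hw⟩
    exact (cs.hasReducedSubword_iff_of_wordProd_eq_demazureProd q hα hαq w).mpr hw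
  · intro hw
    obtain ⟨α, hα, hαq⟩ := cs.exists_isReduced (demazureProd cs q)
    exact ⟨α, hα, hαq.symm,
      (cs.hasReducedSubword_iff_of_wordProd_eq_demazureProd q hα hαq.symm w).mp hw⟩

/-- In a finite Coxeter system `(W, S)`, for any word `q` in the simple
reflections and any `w ∈ W`, the Demazure product satisfies `δ(q) ≥ w` in Bruhat order
if and only if `q` contains a subword that is a reduced expression for `w`. -/
theorem stmt4 {B W : Type*} [Group W] [Finite W] {M : CoxeterMatrix B}
    (cs : CoxeterSystem M W) (q : List B) (w : W) :
    bruhatLE cs w (demazureProd cs q) ↔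
      ∃ q' : List B, q'.Sublist q ∧ cs.IsReduced q' ∧ cs.wordProd q' = w :=
  stmt4_general cs q w
end

section
/- Let (W, S) be a finite Coxeter system, w ∈ W, and s = (s₁,…,s_l) a word in S containing a reduced expression for w. Then the sum over all subwords q of s whose Demazure product δ(q) equals w of (−1)^{ℓ(q) − ℓ(w)} equals 1, where ℓ(q) denotes the number of letters of q. -/
set_option linter.unusedSectionVars false

namespace StrongExch

variable {B W : Type*} [Group W] [DecidableEq W] {M : CoxeterMatrix B}
  (cs : CoxeterSystem M W)

local prefix:100 "ℓ" => cs.length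
local prefix:100 "π" => cs.wordProd
local prefix:100 "σ" => cs.simple

/-- The standard action of generators on `W × ℤˣ` used to prove the exchange property. -/
def sgnAct (i : B) : Function.End (W × ℤˣ) :=
  fun x => (σ i * x.1 * σ i, if x.1 = σ i then -x.2 else x.2)

omit [DecidableEq W] in
lemma conj_pow_eq (a z : W) (ha : a * a = 1) (hz : a * z * a = z⁻¹) (n : ℕ) :
    a * z ^ n * a = (z ^ n)⁻¹ := by
  induction n with
  | zero => simpa using ha
  | succ n ih =>
    have : a * z ^ (n + 1) * a = (a * z ^ n * a) * (a * z * a) := by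
      simp only [mul_assoc, pow_succ]
      congr 2
      rw [← mul_assoc a a, ha, one_mul]
    rw [this, ih, hz, ← mul_inv_rev, ← pow_succ']

lemma sgnAct_mul_pow_apply (i i' : B) (k : ℕ) (t : W) (ε : ℤˣ) :
    ((sgnAct cs i * sgnAct cs i') ^ k) (t, ε) =
      ((σ i * σ i') ^ k * t * ((σ i * σ i') ^ k)⁻¹,
        (∏ j ∈ Finset.range (2 * k),
          if t = ((σ i * σ i') ^ j)⁻¹ * σ i' then (-1 : ℤˣ) else 1) * ε) := by
  set a := σ i with ha
  set b := σ i' with hb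
  set z := a * b with hz
  have hainv : a⁻¹ = a := cs.inv_simple i
  have hbinv : b⁻¹ = b := cs.inv_simple i'
  have haa : a * a = 1 := cs.simple_mul_simple_self i
  have hbb : b * b = 1 := cs.simple_mul_simple_self i'
  have hzinv : b * z * b = z⁻¹ := by
    rw [hz, mul_inv_rev, hainv, hbinv, ← mul_assoc, mul_assoc (b * a), hbb, mul_one]
  have hcomm : ∀ n : ℕ, b * z ^ n = (z ^ n)⁻¹ * b := by
    intro n
    have h := conj_pow_eq b z hbb hzinv n
    rw [← h, mul_assoc, mul_assoc, hbb, mul_one]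
  have hzz : ∀ m n : ℕ, (z ^ m)⁻¹ * ((z ^ n)⁻¹ * b) * z ^ m = (z ^ (n + 2 * m))⁻¹ * b := by
    intro m n
    rw [mul_assoc, mul_assoc, hcomm m]
    group
  have hconjz : ∀ (m : ℕ) (t' v : W), (z ^ m * t' * (z ^ m)⁻¹ = v) ↔ (t' = (z ^ m)⁻¹ * v * z ^ m) := by
    intro m t' v
    constructor
    · intro h; rw [← h]; group
    · intro h; rw [h]; group
  have hsand : ∀ v : W, a * (b * v * b) * a = z * v * z⁻¹ := by
    intro v
    rw [hz, mul_inv_rev, hainv, hbinv]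
    group
  have hconjb : ∀ (u v : W), (b * u * b = v) ↔ (u = b * v * b) := by
    intro u v
    constructor
    · intro h
      rw [← h]
      simp only [← mul_assoc, hbb, one_mul]
      rw [mul_assoc, hbb, mul_one]
    · intro h
      rw [h]
      simp only [← mul_assoc, hbb, one_mul]
      rw [mul_assoc, hbb, mul_one]
  induction k with
  | zero => simp [Function.End]; rfl
  | succ k ih =>
    rw [pow_succ']
    have happ : ∀ y : W × ℤˣ,
        (sgnAct cs i * sgnAct cs i' * (sgnAct cs i * sgnAct cs i') ^ k) y
        = (sgnAct cs i) ((sgnAct cs i') (((sgnAct cs i * sgnAct cs i') ^ k) y)) := fun y => rfl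
    rw [happ, ih]
    simp only [sgnAct, ← ha, ← hb, ← hz]
    have hc1 : (z ^ k * t * (z ^ k)⁻¹ = b) ↔ (t = (z ^ (2 * k))⁻¹ * b) := by
      rw [hconjz k]
      have h0 := hzz k 0
      simp only [pow_zero, inv_one, one_mul, zero_add] at h0
      rw [h0]
    have hc2 : (b * (z ^ k * t * (z ^ k)⁻¹) * b = a) ↔ (t = (z ^ (2 * k + 1))⁻¹ * b) := by
      rw [hconjb, hconjz k]
      have hbab : b * a * b = (z ^ 1)⁻¹ * b := by
        rw [pow_one, hz, mul_inv_rev, hainv, hbinv, mul_assoc]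
      rw [hbab, hzz k 1, Nat.add_comm 1 (2 * k)]
    have h2k : 2 * (k + 1) = 2 * k + 1 + 1 := by ring
    rw [h2k, Finset.prod_range_succ, Finset.prod_range_succ]
    refine Prod.ext ?_ ?_
    · show a * (b * (z ^ k * t * (z ^ k)⁻¹) * b) * a = z ^ (k + 1) * t * (z ^ (k + 1))⁻¹
      rw [hsand]
      group
    · show (if b * (z ^ k * t * (z ^ k)⁻¹) * b = a then
          -(if z ^ k * t * (z ^ k)⁻¹ = b then -((_ : ℤˣ) * ε) else _ * ε)
          else (if z ^ k * t * (z ^ k)⁻¹ = b then -(_ * ε) else _ * ε)) = _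
      simp only [hc1, hc2]
      by_cases h1 : t = (z ^ (2 * k))⁻¹ * b <;>
        by_cases h2 : t = (z ^ (2 * k + 1))⁻¹ * b
      · simp only [if_pos h1, if_pos h2, mul_neg, mul_one, neg_neg, neg_mul, one_mul]
      · simp only [if_pos h1, if_neg h2, mul_neg, mul_one, neg_neg, neg_mul, one_mul]
      · simp only [if_neg h1, if_pos h2, mul_neg, mul_one, neg_neg, neg_mul, one_mul]
      · simp only [if_neg h1, if_neg h2, mul_neg, mul_one, neg_neg, neg_mul, one_mul]



theorem sgnAct_liftable : M.IsLiftable (sgnAct cs) := by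
  intro i i'
  funext x
  obtain ⟨t, ε⟩ := x
  rw [sgnAct_mul_pow_apply]
  have hzm : (σ i * σ i') ^ M i i' = 1 := cs.simple_mul_simple_pow i i'
  have hprod : (∏ j ∈ Finset.range (2 * M i i'),
      if t = ((σ i * σ i') ^ j)⁻¹ * σ i' then (-1 : ℤˣ) else 1) = 1 := by
    rw [two_mul, Finset.prod_range_add]
    have heq : ∀ j : ℕ, (if t = ((σ i * σ i') ^ (M i i' + j))⁻¹ * σ i' then (-1 : ℤˣ) else 1)
        = (if t = ((σ i * σ i') ^ j)⁻¹ * σ i' then (-1 : ℤˣ) else 1) := by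
      intro j
      rw [pow_add, hzm, one_mul]
    simp only [heq]
    rw [← sq]
    exact Int.units_sq _
  rw [hzm, hprod]
  show ((1 : W) * t * 1⁻¹, (1 : ℤˣ) * ε) = (t, ε)
  simp

/-- The lifted sign homomorphism `W →* End (W × ℤˣ)`. -/
noncomputable def sgnHom : W →* Function.End (W × ℤˣ) :=
  cs.lift ⟨sgnAct cs, sgnAct_liftable cs⟩

theorem sgnHom_wordProd_apply (ω : List B) (t : W) (ε : ℤˣ) :
    sgnHom cs (π ω) (t, ε)
      = (π ω * t * (π ω)⁻¹, (-1 : ℤˣ) ^ ((cs.rightInvSeq ω).count t) * ε) := by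
  induction ω generalizing ε with
  | nil =>
    simp only [CoxeterSystem.wordProd_nil, map_one, CoxeterSystem.rightInvSeq_nil]
    show (t, ε) = _
    simp
  | cons j ω ih =>
    rw [CoxeterSystem.wordProd_cons, map_mul]
    show sgnHom cs (σ j) (sgnHom cs (π ω) (t, ε)) = _
    rw [ih]
    have hlift : sgnHom cs (σ j) = sgnAct cs j :=
      CoxeterSystem.lift_apply_simple cs (sgnAct_liftable cs) j
    rw [hlift]
    have hris : cs.rightInvSeq (j :: ω) = ((π ω)⁻¹ * σ j * π ω) :: cs.rightInvSeq ω := rfl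
    rw [hris]
    simp only [List.count_cons, beq_iff_eq]
    have hcond : (π ω * t * (π ω)⁻¹ = σ j) ↔ ((π ω)⁻¹ * σ j * π ω = t) := by
      constructor
      · intro h; rw [← h]; group
      · intro h; rw [← h]; group
    set n := List.count t (cs.rightInvSeq ω) with hn
    simp only [sgnAct]
    by_cases hc : (π ω)⁻¹ * σ j * π ω = t
    · rw [if_pos hc]
      refine Prod.ext ?_ ?_
      · show σ j * (π ω * t * (π ω)⁻¹) * σ j = σ j * π ω * t * (σ j * π ω)⁻¹
        rw [mul_inv_rev, cs.inv_simple]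
        group
      · show (if π ω * t * (π ω)⁻¹ = σ j then -((-1 : ℤˣ) ^ n * ε) else (-1 : ℤˣ) ^ n * ε)
            = (-1 : ℤˣ) ^ (n + 1) * ε
        rw [if_pos (hcond.mpr hc), pow_succ]
        simp [mul_comm, mul_left_comm]
    · rw [if_neg hc]
      refine Prod.ext ?_ ?_
      · show σ j * (π ω * t * (π ω)⁻¹) * σ j = σ j * π ω * t * (σ j * π ω)⁻¹
        rw [mul_inv_rev, cs.inv_simple]
        group
      · show (if π ω * t * (π ω)⁻¹ = σ j then -((-1 : ℤˣ) ^ n * ε) else (-1 : ℤˣ) ^ n * ε)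
            = (-1 : ℤˣ) ^ (n + 0) * ε
        rw [if_neg (fun h => hc (hcond.mp h)), add_zero]

theorem count_ris_parity {ω τ : List B} (h : π ω = π τ) (t : W) :
    ((-1 : ℤˣ) ^ ((cs.rightInvSeq ω).count t)) = (-1 : ℤˣ) ^ ((cs.rightInvSeq τ).count t) := by
  have h1 := sgnHom_wordProd_apply cs ω t 1
  have h2 := sgnHom_wordProd_apply cs τ t 1
  rw [h] at h1
  rw [h1] at h2
  have := congrArg Prod.snd h2
  simpa using this

theorem exchange_simple {ω : List B} (hω : cs.IsReduced ω) {i : B}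
    (hd : cs.IsRightDescent (π ω) i) :
    ∃ ω', ω'.Sublist ω ∧ cs.IsReduced ω' ∧ π ω' = π ω * σ i := by
  obtain ⟨τ', hτ'red, hτ'⟩ := cs.exists_reduced_word' (π ω * σ i)
  have hlt : ℓ (π ω * σ i) < ℓ (π ω) := hd
  have hup : ℓ (π ω) ≤ ℓ (π ω * σ i) + 1 := by
    have := cs.length_mul_le (π ω * σ i) (σ i)
    rw [mul_assoc, cs.simple_mul_simple_self, mul_one, cs.length_simple] at this
    exact this
  have hℓeq : ℓ (π ω) = ℓ (π ω * σ i) + 1 := by omega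
  have hπτ : π (τ' ++ [i]) = π ω := by
    rw [CoxeterSystem.wordProd_append, CoxeterSystem.wordProd_singleton, ← hτ']
    rw [mul_assoc, cs.simple_mul_simple_self, mul_one]
  have hτred : cs.IsReduced (τ' ++ [i]) := by
    show ℓ (π (τ' ++ [i])) = _
    rw [hπτ, List.length_append, List.length_singleton, hℓeq]
    congr 1
    rw [hτ']
    exact hτ'red
  have hmemτ : σ i ∈ cs.rightInvSeq (τ' ++ [i]) := by
    rw [← List.concat_eq_append, cs.rightInvSeq_concat]
    simp
  have hcountτ : (cs.rightInvSeq (τ' ++ [i])).count (σ i) = 1 :=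
    List.count_eq_one_of_mem (hτred.nodup_rightInvSeq) hmemτ
  have hpar := count_ris_parity cs hπτ.symm (σ i)
  rw [hcountτ, pow_one] at hpar
  have hodd : (cs.rightInvSeq ω).count (σ i) ≠ 0 := by
    intro h0
    rw [h0, pow_zero] at hpar
    exact absurd hpar (by decide)
  have hmem : σ i ∈ cs.rightInvSeq ω := by
    rw [← List.count_pos_iff]
    omega
  obtain ⟨j, hj, hget⟩ := List.mem_iff_getElem.mp hmem
  have hj' : j < ω.length := by simpa using hj
  have hgetD : (cs.rightInvSeq ω).getD j 1 = σ i := by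
    rw [List.getD_eq_getElem _ _ hj, hget]
  have herase := cs.wordProd_mul_getD_rightInvSeq ω j
  rw [hgetD] at herase
  refine ⟨ω.eraseIdx j, List.eraseIdx_sublist ω j, ?_, herase.symm⟩
  show ℓ (π (ω.eraseIdx j)) = _
  rw [← herase]
  have hlen : (ω.eraseIdx j).length = ω.length - 1 := by
    rw [List.length_eraseIdx]
    simp [hj']
  have hωlen : ℓ (π ω) = ω.length := hω
  omega


lemma demazureProd_nil : demazureProd cs [] = 1 := rfl

lemma demazureProd_concat (q : List B) (i : B) :
    demazureProd cs (q ++ [i]) =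
      (if ℓ (demazureProd cs q) < ℓ (demazureProd cs q * σ i)
        then demazureProd cs q * σ i else demazureProd cs q) := by
  unfold demazureProd
  rw [List.foldl_append]
  rfl

lemma length_demazureProd_le (q : List B) : ℓ (demazureProd cs q) ≤ q.length := by
  induction q using List.reverseRecOn with
  | nil => simp [demazureProd_nil]
  | append_singleton q i ih =>
    rw [demazureProd_concat]
    have hb : ℓ (demazureProd cs q * σ i) ≤ ℓ (demazureProd cs q) + 1 := by
      have := cs.length_mul_le (demazureProd cs q) (σ i)
      rwa [cs.length_simple] at this
    split_ifs <;> simp only [List.length_append, List.length_singleton] <;> omega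

lemma isRightDescent_demazureProd_concat (q : List B) (i : B) :
    cs.IsRightDescent (demazureProd cs (q ++ [i])) i := by
  rw [demazureProd_concat]
  unfold CoxeterSystem.IsRightDescent
  have hne := cs.length_mul_simple_ne (demazureProd cs q) i
  split_ifs with h
  · rwa [cs.simple_mul_simple_cancel_right]
  · omega

lemma list_sum_map_add {α : Type*} (l : List α) (f g : α → ℤ) :
    (l.map fun x => f x + g x).sum = (l.map f).sum + (l.map g).sum := by
  induction l with
  | nil => simp
  | cons a l ih => simp [ih]; ring

lemma list_sum_map_neg {α : Type*} (l : List α) (f : α → ℤ) :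
    (l.map fun x => -f x).sum = -(l.map f).sum := by
  induction l with
  | nil => simp
  | cons a l ih => simp [ih]; ring

open Classical in
lemma key (s : List B) : ∀ w : W,
    (s.sublists.map (fun q =>
      if demazureProd cs q = w then (-1 : ℤ) ^ (q.length - cs.length w) else 0)).sum
      = if (∃ q : List B, q.Sublist s ∧ cs.IsReduced q ∧ cs.wordProd q = w)
        then 1 else 0 := by
  induction s using List.reverseRecOn with
  | nil =>
    intro w
    by_cases hw : w = 1
    · subst hw
      rw [if_pos ⟨[], List.nil_sublist _, by simp [CoxeterSystem.IsReduced], by simp⟩]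
      simp [demazureProd_nil]
    · rw [if_neg (by
        rintro ⟨q, hq, -, hπ⟩
        rw [List.sublist_nil.mp hq] at hπ
        exact hw (hπ ▸ (cs.wordProd_nil ▸ rfl)))]
      simp [demazureProd_nil]
      intro h
      exact absurd h.symm hw
  | append_singleton s i ih =>
    intro w
    rw [List.sublists_concat, List.map_append, List.sum_append, List.map_map]
    by_cases hdesc : cs.IsRightDescent w i
    · -- descent case
      have hlt : ℓ (w * σ i) < ℓ w := hdesc
      have hup : ℓ w ≤ ℓ (w * σ i) + 1 := by
        have := cs.length_mul_le (w * σ i) (σ i)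
        rwa [mul_assoc, cs.simple_mul_simple_self, mul_one, cs.length_simple] at this
      have hℓ : ℓ w = ℓ (w * σ i) + 1 := by omega
      have hne : w ≠ w * σ i := by
        intro h
        rw [← h] at hlt
        exact lt_irrefl _ hlt
      have hpt : ∀ q : List B,
          (if demazureProd cs (q ++ [i]) = w
            then (-1 : ℤ) ^ ((q ++ [i]).length - ℓ w) else 0)
          = (-(if demazureProd cs q = w then (-1 : ℤ) ^ (q.length - ℓ w) else 0))
            + (if demazureProd cs q = w * σ i
              then (-1 : ℤ) ^ (q.length - ℓ (w * σ i)) else 0) := by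
        intro q
        rw [demazureProd_concat]
        have hlen := length_demazureProd_le cs q
        by_cases h1 : demazureProd cs q = w
        · have hc1 : ¬ (ℓ (demazureProd cs q) < ℓ (demazureProd cs q * σ i)) := by
            rw [h1]; omega
          have hc2 : demazureProd cs q ≠ w * σ i := by rw [h1]; exact hne
          rw [if_neg hc1, if_pos h1, if_pos h1, if_neg hc2]
          rw [add_zero, List.length_append, List.length_singleton]
          rw [h1] at hlen
          have he : q.length + 1 - ℓ w = (q.length - ℓ w) + 1 := by omega
          rw [he, pow_succ]
          ring
        · by_cases h2 : demazureProd cs q = w * σ i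
          · have hc1 : ℓ (demazureProd cs q) < ℓ (demazureProd cs q * σ i) := by
              rw [h2, cs.simple_mul_simple_cancel_right]; omega
            have hc2 : demazureProd cs q * σ i = w := by
              rw [h2, cs.simple_mul_simple_cancel_right]
            rw [if_pos hc1, if_pos hc2, if_neg h1, if_pos h2]
            rw [neg_zero, zero_add, List.length_append, List.length_singleton]
            rw [h2] at hlen
            congr 1
            omega
          · rw [if_neg h1, if_neg h2, neg_zero, add_zero]
            have hd3 : (if ℓ (demazureProd cs q) < ℓ (demazureProd cs q * σ i)
                then demazureProd cs q * σ i else demazureProd cs q) ≠ w := by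
              split_ifs with h3
              · intro h4
                exact h2 (by
                  have := congrArg (fun x => x * σ i) h4
                  simpa [mul_assoc] using this)
              · exact h1
            rw [if_neg hd3]
      have hmap : List.map ((fun q => if demazureProd cs q = w
            then (-1 : ℤ) ^ (q.length - ℓ w) else 0) ∘ (fun x => x ++ [i])) s.sublists
          = List.map (fun q =>
              (-(if demazureProd cs q = w then (-1 : ℤ) ^ (q.length - ℓ w) else 0))
              + (if demazureProd cs q = w * σ i
                then (-1 : ℤ) ^ (q.length - ℓ (w * σ i)) else 0)) s.sublists :=
        List.map_congr_left (fun q _ => by simpa [Function.comp] using hpt q)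
      rw [hmap, list_sum_map_add, list_sum_map_neg, ih w, ih (w * σ i)]
      have hiff : (∃ q : List B, q.Sublist s ∧ cs.IsReduced q ∧ π q = w * σ i)
          ↔ (∃ q : List B, q.Sublist (s ++ [i]) ∧ cs.IsReduced q ∧ π q = w) := by
        constructor
        · rintro ⟨q, hq, hred, hπ⟩
          refine ⟨q ++ [i], hq.append (List.Sublist.refl _), ?_, ?_⟩
          · show ℓ (π (q ++ [i])) = _
            rw [CoxeterSystem.wordProd_append, CoxeterSystem.wordProd_singleton, hπ,
              mul_assoc, cs.simple_mul_simple_self, mul_one, List.length_append,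
              List.length_singleton, hℓ]
            have : ℓ (w * σ i) = q.length := by rw [← hπ]; exact hred
            omega
          · rw [CoxeterSystem.wordProd_append, CoxeterSystem.wordProd_singleton, hπ,
              mul_assoc, cs.simple_mul_simple_self, mul_one]
        · rintro ⟨q, hq, hred, hπ⟩
          rw [List.sublist_append_iff] at hq
          obtain ⟨q1, q2, rfl, hq1, hq2⟩ := hq
          rcases List.sublist_singleton.mp hq2 with rfl | rfl
          · -- q = q1, sublist of s
            rw [List.append_nil] at hred hπ
            have hd' : cs.IsRightDescent (π q1) i := by rwa [hπ]
            obtain ⟨q', hsub, hred', hπ'⟩ := exchange_simple cs hred hd'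
            exact ⟨q', hsub.trans hq1, hred', by rwa [hπ] at hπ'⟩
          · -- q = q1 ++ [i]
            refine ⟨q1, hq1, ?_, ?_⟩
            · show ℓ (π q1) = q1.length
              have h1 : π q1 = w * σ i := by
                rw [CoxeterSystem.wordProd_append, CoxeterSystem.wordProd_singleton] at hπ
                rw [← hπ, mul_assoc, cs.simple_mul_simple_self, mul_one]
              have h2 : ℓ (π (q1 ++ [i])) = q1.length + 1 := by
                rw [hred]; simp
              rw [hπ] at h2
              rw [h1]
              omega
            · rw [CoxeterSystem.wordProd_append, CoxeterSystem.wordProd_singleton] at hπ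
              rw [← hπ, mul_assoc, cs.simple_mul_simple_self, mul_one]
      rw [if_congr hiff rfl rfl]
      ring
    · -- non-descent case
      have hzero : (List.map ((fun q => if demazureProd cs q = w
            then (-1 : ℤ) ^ (q.length - ℓ w) else 0) ∘ (fun x => x ++ [i])) s.sublists).sum
          = 0 := by
        apply List.sum_eq_zero
        intro x hx
        obtain ⟨q, hq, rfl⟩ := List.mem_map.mp hx
        simp only [Function.comp]
        rw [if_neg]
        intro h
        exact hdesc (h ▸ isRightDescent_demazureProd_concat cs q i)
      rw [hzero, add_zero, ih w]
      have hiff : (∃ q : List B, q.Sublist s ∧ cs.IsReduced q ∧ π q = w)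
          ↔ (∃ q : List B, q.Sublist (s ++ [i]) ∧ cs.IsReduced q ∧ π q = w) := by
        constructor
        · rintro ⟨q, hq, hred, hπ⟩
          exact ⟨q, hq.trans (List.sublist_append_left s [i]), hred, hπ⟩
        · rintro ⟨q, hq, hred, hπ⟩
          rw [List.sublist_append_iff] at hq
          obtain ⟨q1, q2, rfl, hq1, hq2⟩ := hq
          rcases List.sublist_singleton.mp hq2 with rfl | rfl
          · rw [List.append_nil] at hred hπ
            exact ⟨q1, hq1, hred, hπ⟩
          · exfalso
            apply hdesc
            have h1 : π q1 = w * σ i := by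
              rw [CoxeterSystem.wordProd_append, CoxeterSystem.wordProd_singleton] at hπ
              rw [← hπ, mul_assoc, cs.simple_mul_simple_self, mul_one]
            show ℓ (w * σ i) < ℓ w
            rw [← h1, ← hπ]
            have h2 : ℓ (π (q1 ++ [i])) = q1.length + 1 := by rw [hred]; simp
            have h3 : ℓ (π q1) ≤ q1.length := cs.length_wordProd_le q1
            omega
      rw [if_congr hiff rfl rfl]

end StrongExch

/-- Let `(W, S)` be a finite Coxeter system, `w ∈ W`, and
`s = (s₁, …, s_l)` a word in `S` containing a reduced expression for `w`. Then the sum,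
over all subwords `q` of `s` (indexed by subsets of positions, i.e. over `s.sublists`)
with Demazure product `δ(q) = w`, of `(−1)^{ℓ(q) − ℓ(w)}`, equals `1`. -/
theorem stmt5 {B W : Type*} [Group W] [Finite W] [DecidableEq W] {M : CoxeterMatrix B}
    (cs : CoxeterSystem M W) (w : W) (s : List B)
    (hs : ∃ q : List B, q.Sublist s ∧ cs.IsReduced q ∧ cs.wordProd q = w) :
    (s.sublists.map (fun q =>
      if demazureProd cs q = w then (-1 : ℤ) ^ (q.length - cs.length w) else 0)).sum
      = 1 := by
  have h := StrongExch.key cs s w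
  rw [if_pos hs] at h
  exact h
end

section
/- Let (W, S) be a finite Coxeter system, w ∈ W, and s = (s₁,…,s_l) a word in S containing a reduced expression for w. Then every facet (maximal face) of the subword complex Δ(s, w) has exactly l − ℓ(w) elements; in particular, the dimension of Δ(s, w) is l − ℓ(w) − 1. -/
/-- The subword of `s` consisting of the letters at positions *not* in `F`,
in their original order. -/
def subwordCompl {B : Type*} (s : List B) (F : Finset (Fin s.length)) : List B :=
  ((List.finRange s.length).filter (fun i => i ∉ F)).map s.get

/-- The subword complex `Δ(s, w)`: the faces are the subsets `F` of positions of `s`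
such that the subword of `s` with positions in the complement of `F` contains a
reduced expression for `w`. -/
def subwordComplex {B W : Type*} [Group W] {M : CoxeterMatrix B}
    (cs : CoxeterSystem M W) (s : List B) (w : W) : Set (Finset (Fin s.length)) :=
  {F | ∃ q : List B, q.Sublist (subwordCompl s F) ∧ cs.IsReduced q ∧ cs.wordProd q = w}

/-- Let `(W, S)` be a finite Coxeter system, `w ∈ W`, and
`s = (s₁, …, s_l)` a word in `S` containing a reduced expression for `w`. Then every
facet (maximal face) `F` of the subword complex `Δ(s, w)` has exactly `l − ℓ(w)`
elements; in particular (since the dimension of a face `F` is `|F| − 1`), the dimension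
of `Δ(s, w)` is `l − ℓ(w) − 1`. -/
theorem stmt7 {B W : Type*} [Group W] [Finite W] {M : CoxeterMatrix B}
    (cs : CoxeterSystem M W) (s : List B) (w : W)
    (hs : ∃ q : List B, q.Sublist s ∧ cs.IsReduced q ∧ cs.wordProd q = w)
    (F : Finset (Fin s.length)) (hF : F ∈ subwordComplex cs s w)
    (hmax : ∀ G ∈ subwordComplex cs s w, F ⊆ G → G = F) :
    F.card = s.length - cs.length w := by
  classical
  obtain ⟨q, hq_sub, hq_red, hq_prod⟩ := hF
  set P : List (Fin s.length) := (List.finRange s.length).filter (fun i => i ∉ F) with hP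
  have hPnodup : P.Nodup := (List.nodup_finRange _).filter _
  have hsubC : subwordCompl s F = P.map s.get := rfl
  have hPj : ∀ j ∈ P, j ∉ F := by
    intro j hj
    rw [hP, List.mem_filter] at hj
    simpa using hj.2
  have hlw : cs.length w = q.length := by rw [← hq_prod]; exact hq_red
  have hqP : q.length ≤ P.length := by
    have := hq_sub.length_le
    simpa [hsubC] using this
  have key : P.length ≤ q.length := by
    by_contra hlt
    push_neg at hlt
    rw [hsubC] at hq_sub
    obtain ⟨Q, hQsub, hqeq⟩ := List.sublist_map_iff.mp hq_sub
    have hQlen : Q.length < P.length := by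
      rw [hqeq, List.length_map] at hlt; exact hlt
    have hQnodup : Q.Nodup := hQsub.nodup hPnodup
    -- find j ∈ P, j ∉ Q
    have : ∃ j ∈ P, j ∉ Q := by
      by_contra h
      push_neg at h
      have hsub : P.toFinset ⊆ Q.toFinset := by
        intro x hx
        rw [List.mem_toFinset] at hx ⊢
        exact h x hx
      have := Finset.card_le_card hsub
      rw [List.toFinset_card_of_nodup hPnodup, List.toFinset_card_of_nodup hQnodup] at this
      omega
    obtain ⟨j, hjP, hjQ⟩ := this
    have hQerase : Q.Sublist (P.erase j) := by
      rw [hPnodup.erase_eq_filter]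
      have hQf : Q.filter (fun x => x != j) = Q := by
        rw [List.filter_eq_self]
        intro a ha
        simp only [bne_iff_ne, ne_eq, decide_eq_true_eq]
        rintro rfl
        exact hjQ ha
      rw [← hQf]
      exact hQsub.filter _
    have hG : subwordCompl s (insert j F) = (P.erase j).map s.get := by
      rw [hPnodup.erase_eq_filter, hP, List.filter_filter]
      unfold subwordCompl
      congr 1
      apply List.filter_congr
      intro i _
      simp only [Finset.mem_insert]
      by_cases h1 : i = j <;> by_cases h2 : i ∈ F <;> simp [h1, h2]
    have hGmem : insert j F ∈ subwordComplex cs s w := by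
      refine ⟨q, ?_, hq_red, hq_prod⟩
      rw [hG, hqeq]
      exact hQerase.map _
    have := hmax _ hGmem (Finset.subset_insert _ _)
    have hjF : j ∈ F := by rw [← this]; exact Finset.mem_insert_self _ _
    exact hPj j hjP hjF
  have hPcard : P.length + F.card = s.length := by
    have h1 : P.toFinset = Fᶜ := by
      ext i
      simp [hP, List.mem_filter]
    have h2 := List.toFinset_card_of_nodup hPnodup
    rw [h1, Finset.card_compl, Fintype.card_fin] at h2
    have h3 : F.card ≤ s.length := by
      simpa using Finset.card_le_univ F
    omega
  omega
end

section
/- In the symmetric group S_n with simple transpositions σ₁,…,σ_{n−1}, an element x is cominuscule (i.e. there exists a vector v with α(v) = −1 for all α in the inversion set I(x^{−1})) if and only if x is 321-avoiding, i.e. there are no indices i < j < k with x(i) > x(j) > x(k). -/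
/-- In the symmetric group `S_n` (the Weyl group of type `A_{n−1}`,
acting on `ℝⁿ` with positive roots `e_i − e_j`, `i < j`, and with
`I(x⁻¹) = {e_i − e_j : i < j, x⁻¹(i) > x⁻¹(j)}`), a permutation `x` is cominuscule —
i.e. there is a vector `v ∈ ℝⁿ` with `α(v) = v_i − v_j = −1` for every root
`e_i − e_j ∈ I(x⁻¹)` — if and only if `x` is `321`-avoiding: there are no indices
`i < j < k` with `x(i) > x(j) > x(k)`. -/
theorem stmt13 {n : ℕ} (x : Equiv.Perm (Fin n)) :
    (∃ v : Fin n → ℝ, ∀ i j : Fin n, i < j → x.symm j < x.symm i → v i - v j = -1) ↔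
      ¬ ∃ i j k : Fin n, i < j ∧ j < k ∧ x j < x i ∧ x k < x j := by
  constructor
  · rintro ⟨v, hv⟩ ⟨i, j, k, hij, hjk, h1, h2⟩
    have e1 := hv (x k) (x j) h2 (by simp [hjk])
    have e2 := hv (x j) (x i) h1 (by simp [hij])
    have e3 := hv (x k) (x i) (h2.trans h1) (by simp [hij.trans hjk])
    linarith
  · intro h
    classical
    refine ⟨fun i => if ∃ p, p < i ∧ x.symm i < x.symm p then 1 else 0, ?_⟩
    intro i j hij hji
    dsimp only
    have hne : ¬ ∃ p, p < i ∧ x.symm i < x.symm p := by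
      rintro ⟨p, hpi, hip⟩
      exact h ⟨x.symm j, x.symm i, x.symm p, hji, hip, by simp [hij], by simp [hpi]⟩
    rw [if_neg hne, if_pos ⟨i, hij, hji⟩]
    norm_num
end

section
/- In the root system of type D₄ with simple roots α₁ = e₁−e₂, α₂ = e₂−e₃, α₃ = e₃−e₄, α₄ = e₃+e₄ and Weyl group element x = s₂s₁s₃s₄s₂ (product of simple reflections), the inversion set I(x^{−1}) equals {e₁−e₃, e₁+e₂, e₂−e₃, e₂−e₄, e₂+e₄}, every element of I(x^{−1}) is integrally indecomposable in I(x^{−1}), yet there is no vector v with α(v) = −1 for all α ∈ I(x^{−1}) (since (e₂−e₄) + (e₂+e₄) = (e₁+e₂) + (e₂−e₃) − (e₁−e₃) forces inconsistent values); hence x is not cominuscule. -/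
noncomputable section D4Example

/-- The standard basis vector `e_i` of `ℝ⁴`. -/
def ee (i : Fin 4) : Fin 4 → ℝ := Pi.single i 1

/-- The standard inner product on `ℝ⁴`. -/
def ddot (u v : Fin 4 → ℝ) : ℝ := ∑ k, u k * v k

/-- Reflection in a root `a` of squared length `2`: `v ↦ v − ⟨v, a⟩ a`. -/
def reflRoot (a : Fin 4 → ℝ) : (Fin 4 → ℝ) → (Fin 4 → ℝ) :=
  fun v => v - (ddot v a) • a

/-- The simple roots of `D₄`: `α₁ = e₁−e₂`, `α₂ = e₂−e₃`, `α₃ = e₃−e₄`, `α₄ = e₃+e₄`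
(here `0`-indexed). -/
def simpleRootD4 : Fin 4 → (Fin 4 → ℝ) :=
  ![ee 0 - ee 1, ee 1 - ee 2, ee 2 - ee 3, ee 2 + ee 3]

/-- The simple reflection `s_i` of `D₄`. -/
def sD4 (i : Fin 4) : (Fin 4 → ℝ) → (Fin 4 → ℝ) := reflRoot (simpleRootD4 i)

/-- The positive roots of `D₄`: `e_i − e_j` and `e_i + e_j` for `i < j`. -/
def PosD4 : Finset (Fin 4 → ℝ) :=
  ((Finset.univ : Finset (Fin 4 × Fin 4)).filter (fun p => p.1 < p.2)).image
      (fun p => ee p.1 - ee p.2) ∪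
    ((Finset.univ : Finset (Fin 4 × Fin 4)).filter (fun p => p.1 < p.2)).image
      (fun p => ee p.1 + ee p.2)

/-- The negative roots of `D₄`. -/
def NegD4 : Finset (Fin 4 → ℝ) := PosD4.image (fun b => -b)

/-- The Weyl group element `x = s₂s₁s₃s₄s₂` of `D₄` (`1`-indexed), as a map on `ℝ⁴`. -/
def xD4 : (Fin 4 → ℝ) → (Fin 4 → ℝ) := sD4 1 ∘ sD4 0 ∘ sD4 2 ∘ sD4 3 ∘ sD4 1

/-- The inverse `x⁻¹ = s₂s₄s₃s₁s₂` of `x = s₂s₁s₃s₄s₂` (`1`-indexed). -/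
def xD4inv : (Fin 4 → ℝ) → (Fin 4 → ℝ) := sD4 1 ∘ sD4 3 ∘ sD4 2 ∘ sD4 0 ∘ sD4 1

/-- The claimed inversion set `{e₁−e₃, e₁+e₂, e₂−e₃, e₂−e₄, e₂+e₄}` (`1`-indexed). -/
def AD4 : Finset (Fin 4 → ℝ) :=
  {ee 0 - ee 2, ee 0 + ee 1, ee 1 - ee 2, ee 1 - ee 3, ee 1 + ee 3}


/-! ### Auxiliary integer model and transfer lemmas -/

def eZ (i : Fin 4) : Fin 4 → ℤ := Pi.single i 1
def dotZ (u v : Fin 4 → ℤ) : ℤ := ∑ k, u k * v k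
def reflZ (a : Fin 4 → ℤ) : (Fin 4 → ℤ) → (Fin 4 → ℤ) := fun v => v - (dotZ v a) • a
def rootZ : Fin 4 → (Fin 4 → ℤ) :=
  ![eZ 0 - eZ 1, eZ 1 - eZ 2, eZ 2 - eZ 3, eZ 2 + eZ 3]
def sZ (i : Fin 4) : (Fin 4 → ℤ) → (Fin 4 → ℤ) := reflZ (rootZ i)
def xZinv : (Fin 4 → ℤ) → (Fin 4 → ℤ) := sZ 1 ∘ sZ 3 ∘ sZ 2 ∘ sZ 0 ∘ sZ 1
def PosZ : Finset (Fin 4 → ℤ) :=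
  ((Finset.univ : Finset (Fin 4 × Fin 4)).filter (fun p => p.1 < p.2)).image
      (fun p => eZ p.1 - eZ p.2) ∪
    ((Finset.univ : Finset (Fin 4 × Fin 4)).filter (fun p => p.1 < p.2)).image
      (fun p => eZ p.1 + eZ p.2)
def NegZ : Finset (Fin 4 → ℤ) := PosZ.image (fun b => -b)
def AZ : Finset (Fin 4 → ℤ) :=
  {eZ 0 - eZ 2, eZ 0 + eZ 1, eZ 1 - eZ 2, eZ 1 - eZ 3, eZ 1 + eZ 3}

def ι (v : Fin 4 → ℤ) : Fin 4 → ℝ := fun k => (v k : ℝ)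

lemma ι_inj : Function.Injective ι := fun _ _ h =>
  funext fun k => Int.cast_injective (congrFun h k)

lemma ι_eZ (i : Fin 4) : ι (eZ i) = ee i := by
  funext k; simp [ι, eZ, ee, Pi.single_apply]

lemma ι_sub (u v : Fin 4 → ℤ) : ι (u - v) = ι u - ι v := by funext k; simp [ι]

lemma ι_add (u v : Fin 4 → ℤ) : ι (u + v) = ι u + ι v := by funext k; simp [ι]

lemma ι_neg (v : Fin 4 → ℤ) : ι (-v) = -ι v := by funext k; simp [ι]

lemma ι_nsmul (n : ℕ) (v : Fin 4 → ℤ) : ι (n • v) = n • ι v := by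
  funext k; simp [ι]

lemma ddot_ι (u v : Fin 4 → ℤ) : ddot (ι u) (ι v) = (dotZ u v : ℝ) := by
  simp [ddot, dotZ, ι]

lemma refl_ι (a v : Fin 4 → ℤ) : reflRoot (ι a) (ι v) = ι (reflZ a v) := by
  funext k; simp [reflRoot, reflZ, ddot_ι, ι]

lemma root_ι (i : Fin 4) : simpleRootD4 i = ι (rootZ i) := by
  fin_cases i <;> · funext k; simp [simpleRootD4, rootZ, ι, ee, eZ, Pi.single_apply]

lemma s_ι (i : Fin 4) (v : Fin 4 → ℤ) : sD4 i (ι v) = ι (sZ i v) := by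
  rw [sD4, sZ, root_ι, refl_ι]

lemma xinv_ι (v : Fin 4 → ℤ) : xD4inv (ι v) = ι (xZinv v) := by
  simp [xD4inv, xZinv, Function.comp, s_ι]

lemma Pos_eq : PosD4 = PosZ.image ι := by
  rw [PosD4, PosZ, Finset.image_union, Finset.image_image, Finset.image_image]
  congr 1 <;> · apply Finset.image_congr; intro p _; simp [Function.comp, ι_sub, ι_add, ι_eZ]

lemma Neg_eq : NegD4 = NegZ.image ι := by
  rw [NegD4, NegZ, Pos_eq, Finset.image_image, Finset.image_image]
  apply Finset.image_congr; intro v _; simp [Function.comp, ι_neg]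

lemma A_eq : AD4 = AZ.image ι := by
  rw [AD4, AZ]
  simp only [Finset.image_insert, Finset.image_singleton, ι_sub, ι_add, ι_eZ]

lemma ddot_sub' (u w a : Fin 4 → ℝ) : ddot (u - w) a = ddot u a - ddot w a := by
  simp [ddot, sub_mul, Finset.sum_sub_distrib]

lemma ddot_smul' (c : ℝ) (u a : Fin 4 → ℝ) : ddot (c • u) a = c * ddot u a := by
  simp [ddot, Finset.mul_sum, mul_assoc]

lemma root_norm (i : Fin 4) : ddot (simpleRootD4 i) (simpleRootD4 i) = 2 := by
  fin_cases i <;>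
    simp [simpleRootD4, ddot, ee, Fin.sum_univ_four, Pi.single_apply] <;> norm_num

lemma sD4_sD4 (i : Fin 4) (v : Fin 4 → ℝ) : sD4 i (sD4 i v) = v := by
  simp only [sD4, reflRoot, ddot_sub', ddot_smul', root_norm]
  funext k
  simp
  ring

lemma part0 (v : Fin 4 → ℝ) : xD4 (xD4inv v) = v ∧ xD4inv (xD4 v) = v := by
  constructor
  · show sD4 1 (sD4 0 (sD4 2 (sD4 3 (sD4 1 (sD4 1 (sD4 3 (sD4 2 (sD4 0 (sD4 1 v))))))))) = v
    rw [sD4_sD4 1, sD4_sD4 3, sD4_sD4 2, sD4_sD4 0, sD4_sD4 1]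
  · show sD4 1 (sD4 3 (sD4 2 (sD4 0 (sD4 1 (sD4 1 (sD4 0 (sD4 2 (sD4 3 (sD4 1 v))))))))) = v
    rw [sD4_sD4 1, sD4_sD4 0, sD4_sD4 2, sD4_sD4 3, sD4_sD4 1]

lemma part1 : PosD4.filter (fun a => xD4inv a ∈ NegD4) = AD4 := by
  rw [Pos_eq, Finset.filter_image, A_eq]
  congr 1
  rw [Finset.filter_congr (q := fun v => xZinv v ∈ NegZ)
    (fun v _ => by rw [xinv_ι, Neg_eq]; exact ⟨fun h => by
      rcases Finset.mem_image.1 h with ⟨w, hw, hww⟩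
      rwa [← ι_inj hww], fun h => Finset.mem_image_of_mem ι h⟩)]
  decide

lemma part2 : ∀ β ∈ AD4, ¬ ∃ c : (Fin 4 → ℝ) → ℕ,
      (∀ γ ∉ AD4, c γ = 0) ∧ 2 ≤ ∑ γ ∈ AD4, c γ ∧ ∑ γ ∈ AD4, c γ • γ = β := by
  intro β hβ
  rintro ⟨c, -, hc2, hcs⟩
  rw [A_eq] at hβ hc2 hcs
  obtain ⟨b, hb, rfl⟩ := Finset.mem_image.1 hβ
  have hinj : ∀ x ∈ AZ, ∀ y ∈ AZ, ι x = ι y → x = y := fun x _ y _ h => ι_inj h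
  rw [Finset.sum_image hinj] at hc2
  rw [Finset.sum_image hinj] at hcs
  have hcs' : ∑ v ∈ AZ, c (ι v) • v = b := by
    apply ι_inj
    rw [← hcs]
    rw [show ι (∑ v ∈ AZ, c (ι v) • v) = ∑ v ∈ AZ, ι (c (ι v) • v) from by
      funext k; simp [ι, Finset.sum_apply]]
    exact Finset.sum_congr rfl fun v _ => (ι_nsmul _ _)
  have hAZ : AZ = {eZ 0 - eZ 2, eZ 0 + eZ 1, eZ 1 - eZ 2, eZ 1 - eZ 3, eZ 1 + eZ 3} := rfl
  rw [hAZ, Finset.sum_insert (by decide), Finset.sum_insert (by decide),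
    Finset.sum_insert (by decide), Finset.sum_insert (by decide),
    Finset.sum_singleton] at hc2 hcs'
  set n0 := c (ι (eZ 0 - eZ 2))
  set n1 := c (ι (eZ 0 + eZ 1))
  set n2 := c (ι (eZ 1 - eZ 2))
  set n3 := c (ι (eZ 1 - eZ 3))
  set n4 := c (ι (eZ 1 + eZ 3))
  have e0 := congrFun hcs' 0
  have e1 := congrFun hcs' 1
  have e2 := congrFun hcs' 2
  have e3 := congrFun hcs' 3
  simp [eZ, Pi.single_apply] at e0 e1 e2 e3
  have hb5 : b = eZ 0 - eZ 2 ∨ b = eZ 0 + eZ 1 ∨ b = eZ 1 - eZ 2 ∨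
      b = eZ 1 - eZ 3 ∨ b = eZ 1 + eZ 3 := by
    simpa [AZ] using hb
  rcases hb5 with rfl | rfl | rfl | rfl | rfl <;>
    simp [eZ, Pi.single_apply] at e0 e1 e2 e3 <;> omega

lemma part3 : ¬ ∃ v : Fin 4 → ℝ, ∀ a ∈ AD4, ddot a v = -1 := by
  rintro ⟨v, hv⟩
  have h1 := hv (ee 0 - ee 2) (by simp [AD4])
  have h2 := hv (ee 0 + ee 1) (by simp [AD4])
  have h3 := hv (ee 1 - ee 2) (by simp [AD4])
  have h4 := hv (ee 1 - ee 3) (by simp [AD4])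
  have h5 := hv (ee 1 + ee 3) (by simp [AD4])
  simp [ddot, ee, Fin.sum_univ_four, Pi.single_apply] at h1 h2 h3 h4 h5
  linarith

/-- In type `D₄`, for `x = s₂s₁s₃s₄s₂`: (0) `xD4inv` really is the
inverse of `x`; (1) the inversion set `I(x⁻¹) = Φ⁺ ∩ xΦ⁻ = {α ∈ Φ⁺ : x⁻¹α ∈ Φ⁻}`
equals `{e₁−e₃, e₁+e₂, e₂−e₃, e₂−e₄, e₂+e₄}`; (2) every element of `I(x⁻¹)` is
integrally indecomposable in `I(x⁻¹)` (not a sum of two or more of its elements);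
yet (3) there is no vector `v` with `α(v) = −1` for all `α ∈ I(x⁻¹)`. Hence `x` is
not cominuscule. -/
theorem stmt17 :
    (∀ v : Fin 4 → ℝ, xD4 (xD4inv v) = v ∧ xD4inv (xD4 v) = v) ∧
    PosD4.filter (fun a => xD4inv a ∈ NegD4) = AD4 ∧
    (∀ β ∈ AD4, ¬ ∃ c : (Fin 4 → ℝ) → ℕ,
      (∀ γ ∉ AD4, c γ = 0) ∧ 2 ≤ ∑ γ ∈ AD4, c γ ∧ ∑ γ ∈ AD4, c γ • γ = β) ∧
    ¬ ∃ v : Fin 4 → ℝ, ∀ a ∈ AD4, ddot a v = -1 :=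
  ⟨part0, part1, part2, part3⟩

end D4Example
end
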